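/- Let P = {p₁, …, p_n} be a finite nonempty set of points in ℝ^d, let α > 0, and let p, q ≥ 1 be integers. Call an ordered pair of indices (i, i') exceptional if d_i = d_{i'} and p_{i1} − p_{i'1} = t·α for some integer t with 0 ≤ t < p + q. Call a distance between two endpoints of E(r) exceptional if it equals |a_i(r) − a_{i'}(r)| for an exceptional pair (i, i') or |b_i(r) − b_{i'}(r)| for an exceptional pair (i, i'); otherwise call it non-exceptional. Suppose r is a constrained-feasible radius and that every non-exceptional distance between two endpoints of E(r) differs from t·α for every integer t with 0 ≤ t ≤ p + q − 1. Then there exists r' < r that is constrained-feasible. -/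

import Mathlib

/-- A point of `ℝ^d` lies on the line `ℓ` (the x-axis) iff all coordinates other than the
first vanish. -/
def OnAxis {d : ℕ} (x : EuclideanSpace ℝ (Fin d)) : Prop :=
  ∀ j : Fin d, (j : ℕ) ≠ 0 → x j = 0

/-- The distance `d_i = sqrt(p_{i2}² + … + p_{id}²)` of a point of `ℝ^d` from the x-axis. -/
noncomputable def distToAxis {d : ℕ} (p : EuclideanSpace ℝ (Fin d)) : ℝ :=
  Real.sqrt (∑ j ∈ Finset.univ.filter (fun j : Fin d => (j : ℕ) ≠ 0), (p j) ^ 2)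

/-- The left endpoint `aᵢ(r) = p_{i1} − sqrt(r² − dᵢ²)`. -/
noncomputable def aEnd {d : ℕ} (hd : 0 < d) (p : EuclideanSpace ℝ (Fin d)) (r : ℝ) : ℝ :=
  p ⟨0, hd⟩ - Real.sqrt (r ^ 2 - distToAxis p ^ 2)

/-- The right endpoint `bᵢ(r) = p_{i1} + sqrt(r² − dᵢ²)`. -/
noncomputable def bEnd {d : ℕ} (hd : 0 < d) (p : EuclideanSpace ℝ (Fin d)) (r : ℝ) : ℝ :=
  p ⟨0, hd⟩ + Real.sqrt (r ^ 2 - distToAxis p ^ 2)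

/-- `E(r)`: the set of all endpoints `aᵢ(r)`, `bᵢ(r)` over points `pᵢ` with `dᵢ ≤ r`. -/
def Endpoints {d n : ℕ} (hd : 0 < d) (pts : Fin n → EuclideanSpace ℝ (Fin d))
    (r : ℝ) : Set ℝ :=
  {e | ∃ i : Fin n, distToAxis (pts i) ≤ r ∧
    (e = aEnd hd (pts i) r ∨ e = bEnd hd (pts i) r)}

/-- A feasible solution of the `(p ∧ q, α)` problem on the point set `{pts i}` with
covering radius `r`, all of whose centers lie on the x-axis. -/
def ConstrainedFeasible {d n : ℕ} (pts : Fin n → EuclideanSpace ℝ (Fin d))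
    (α : ℝ) (p q : ℕ) (r : ℝ) : Prop :=
  ∃ (c : Fin p → EuclideanSpace ℝ (Fin d)) (e : Fin q → EuclideanSpace ℝ (Fin d)),
    (∀ i, OnAxis (c i)) ∧ (∀ j, OnAxis (e j)) ∧
    (∀ k : Fin n, ∃ i, dist (pts k) (c i) ≤ r) ∧
    (∀ k : Fin n, ∃ j, dist (pts k) (e j) ≤ r) ∧
    (∀ i j, α ≤ dist (c i) (e j))

/-- A pair of indices `(i, i')` is exceptional if `dᵢ = d_{i'}` and
`p_{i1} − p_{i'1} = t·α` for some integer `0 ≤ t < p + q`. -/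
def ExcPair {d n : ℕ} (hd : 0 < d) (pts : Fin n → EuclideanSpace ℝ (Fin d))
    (α : ℝ) (p q : ℕ) (i i' : Fin n) : Prop :=
  distToAxis (pts i) = distToAxis (pts i') ∧
  ∃ t : ℕ, t < p + q ∧ pts i ⟨0, hd⟩ - pts i' ⟨0, hd⟩ = t * α

/-!
Project the centers to their first coordinates `z`. A center on `ℓ` covers `pᵢ` iff its
coordinate lies in `[aᵢ(r), bᵢ(r)]`, so it suffices to move every center strictly inside all
the intervals it lies in without violating the separation. Join two centers when they are
exactly `α` apart, and shift each component of this graph rigidly by `η` to the right if it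
contains a center sitting at some left endpoint `aᵢ`, to the left if it contains one at some
right endpoint `b_{i'}`, and not at all otherwise. A component cannot do both: a path of
length `< p + q` would make `aᵢ − b_{i'}` an integer multiple `t·α` with `|t| ≤ p + q − 1`.
Tight pairs move together and all other inequalities are strict, so a small `η > 0` works,
and then every point is covered within some `r' < r`.
-/

open Filter Topology Set

section Axis

variable {d : ℕ}

lemma dist_sq_of_onAxis (hd : 0 < d) {x : EuclideanSpace ℝ (Fin d)} (hx : OnAxis x)
    (y : EuclideanSpace ℝ (Fin d)) :
    dist y x ^ 2 = (y ⟨0, hd⟩ - x ⟨0, hd⟩) ^ 2 + distToAxis y ^ 2 := by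
  have hfirst : Finset.univ.filter (fun j : Fin d => ¬ (j : ℕ) ≠ 0) = {⟨0, hd⟩} := by
    ext j
    simp [Fin.ext_iff]
  rw [EuclideanSpace.dist_eq, Real.sq_sqrt (by positivity), distToAxis,
    Real.sq_sqrt (by positivity),
    ← Finset.sum_filter_add_sum_filter_not Finset.univ (fun j : Fin d => (j : ℕ) ≠ 0), hfirst,
    Finset.sum_singleton, add_comm, Real.dist_eq, sq_abs]
  congr 1
  refine Finset.sum_congr rfl fun j hj => ?_
  rw [hx j (Finset.mem_filter.mp hj).2, Real.dist_eq, sub_zero, sq_abs]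

lemma distToAxis_eq_zero_of_onAxis {x : EuclideanSpace ℝ (Fin d)} (hx : OnAxis x) :
    distToAxis x = 0 := by
  rw [distToAxis, Real.sqrt_eq_zero (by positivity)]
  exact Finset.sum_eq_zero fun j hj => by rw [hx j (Finset.mem_filter.mp hj).2]; ring

lemma dist_eq_abs_of_onAxis (hd : 0 < d) {x y : EuclideanSpace ℝ (Fin d)} (hx : OnAxis x)
    (hy : OnAxis y) : dist x y = |x ⟨0, hd⟩ - y ⟨0, hd⟩| := by
  rw [← Real.sqrt_sq dist_nonneg, dist_sq_of_onAxis hd hy, distToAxis_eq_zero_of_onAxis hx,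
    zero_pow two_ne_zero, add_zero, Real.sqrt_sq_eq_abs]

lemma onAxis_single (hd : 0 < d) (v : ℝ) :
    OnAxis (EuclideanSpace.single (⟨0, hd⟩ : Fin d) v) := by
  intro j hj
  rw [PiLp.single_apply, if_neg (fun h => hj (by rw [h]))]

lemma distToAxis_le_dist (hd : 0 < d) {x : EuclideanSpace ℝ (Fin d)} (hx : OnAxis x)
    (y : EuclideanSpace ℝ (Fin d)) : distToAxis y ≤ dist y x :=
  le_of_sq_le_sq (by nlinarith [dist_sq_of_onAxis hd hx y]) dist_nonneg

lemma mem_Icc_of_dist_le (hd : 0 < d) {x y : EuclideanSpace ℝ (Fin d)} (hx : OnAxis x) {r : ℝ}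
    (h : dist y x ≤ r) : x ⟨0, hd⟩ ∈ Icc (aEnd hd y r) (bEnd hd y r) := by
  have hsq : (y ⟨0, hd⟩ - x ⟨0, hd⟩) ^ 2 ≤ r ^ 2 - distToAxis y ^ 2 := by
    nlinarith [dist_sq_of_onAxis hd hx y, dist_nonneg (x := y) (y := x)]
  have := abs_le.mp (Real.abs_le_sqrt hsq)
  constructor <;> simp only [aEnd, bEnd] <;> linarith

lemma dist_lt_of_mem_Ioo (hd : 0 < d) {x y : EuclideanSpace ℝ (Fin d)} (hx : OnAxis x) {r : ℝ}
    (hr : distToAxis y ≤ r) (h : x ⟨0, hd⟩ ∈ Ioo (aEnd hd y r) (bEnd hd y r)) : dist y x < r := by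
  have h0 : 0 ≤ distToAxis y := Real.sqrt_nonneg _
  have habs : |y ⟨0, hd⟩ - x ⟨0, hd⟩| < √(r ^ 2 - distToAxis y ^ 2) := by
    simp only [aEnd, bEnd, mem_Ioo] at h
    rw [abs_sub_lt_iff]
    constructor <;> linarith
  rw [Real.lt_sqrt (abs_nonneg _), sq_abs] at habs
  refine lt_of_pow_lt_pow_left₀ 2 (h0.trans hr) ?_
  rw [dist_sq_of_onAxis hd hx]
  linarith

end Axis

lemma eventually_lt_add_mul {x y c : ℝ} (h : x < y ∨ x = y ∧ 0 < c) :
    ∀ᶠ η in 𝓝[>] 0, x < y + η * c := by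
  rcases h with hlt | ⟨rfl, hc⟩
  · refine eventually_nhdsWithin_of_eventually_nhds ?_
    exact ((continuous_const.add (continuous_id.mul continuous_const)).tendsto' 0 y
      (by simp)).eventually_const_lt hlt
  · exact eventually_nhdsWithin_of_forall fun η (hη : 0 < η) => by nlinarith

lemma eventually_add_mul_lt {x y c : ℝ} (h : y < x ∨ y = x ∧ c < 0) :
    ∀ᶠ η in 𝓝[>] 0, y + η * c < x := by
  have := eventually_lt_add_mul (x := -x) (y := -y) (c := -c) (by
    rcases h with h | ⟨rfl, hc⟩
    · exact .inl (neg_lt_neg h)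
    · exact .inr ⟨rfl, neg_pos.mpr hc⟩)
  filter_upwards [this] with η hη
  linarith

section TightGraph

variable {V ν : Type*} (α : ℝ) (z : V → ℝ)

def tightGraph : SimpleGraph V where
  Adj u v := u ≠ v ∧ |z u - z v| = α
  symm := ⟨fun _ _ h => ⟨h.1.symm, by rw [abs_sub_comm]; exact h.2⟩⟩
  loopless := ⟨fun _ h => h.1 rfl⟩

lemma tightGraph.exists_int_of_walk {u v : V} (w : (tightGraph α z).Walk u v) :
    ∃ s : ℤ, s.natAbs ≤ w.length ∧ z u - z v = s * α := by
  induction w with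
  | nil => exact ⟨0, by simp⟩
  | @cons u u' v h w ih =>
    obtain ⟨s, hs, hz⟩ := ih
    rw [SimpleGraph.Walk.length_cons]
    rcases eq_or_eq_neg_of_abs_eq h.2 with h' | h'
    · refine ⟨s + 1, by omega, ?_⟩
      push_cast
      linarith
    · refine ⟨s - 1, by omega, ?_⟩
      push_cast
      linarith

lemma tightGraph.exists_int_of_reachable [Fintype V] {u v : V}
    (h : (tightGraph α z).Reachable u v) :
    ∃ s : ℤ, s.natAbs < Fintype.card V ∧ z u - z v = s * α := by
  classical
  obtain ⟨w⟩ := h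
  obtain ⟨s, hs, hz⟩ := exists_int_of_walk α z w.bypass
  exact ⟨s, hs.trans_lt w.bypass_isPath.length_lt, hz⟩

variable (a b : ν → ℝ)

open Classical in
noncomputable def shiftDir (c : (tightGraph α z).ConnectedComponent) : ℝ :=
  if ∃ v ∈ c.supp, z v ∈ range a then 1 else if ∃ v ∈ c.supp, z v ∈ range b then -1 else 0

variable {α z a b}

lemma shiftDir_eq_one {u : V} (hu : z u ∈ range a) :
    shiftDir α z a b ((tightGraph α z).connectedComponentMk u) = 1 :=
  if_pos ⟨u, rfl, hu⟩

lemma shiftDir_eq_neg_one [Fintype V]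
    (hab : ∀ k k' (s : ℤ), s.natAbs < Fintype.card V → a k - b k' ≠ s * α)
    {u : V} (hu : z u ∈ range b) :
    shiftDir α z a b ((tightGraph α z).connectedComponentMk u) = -1 := by
  have hleft : ¬ ∃ v ∈ ((tightGraph α z).connectedComponentMk u).supp, z v ∈ range a := by
    rintro ⟨v, hv, k, hk⟩
    obtain ⟨k', hk'⟩ := hu
    rw [SimpleGraph.ConnectedComponent.mem_supp_iff, SimpleGraph.ConnectedComponent.eq] at hv
    obtain ⟨s, hs, hz⟩ := tightGraph.exists_int_of_reachable α z hv
    exact hab k k' s hs (by rw [hk, hk', hz])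
  rw [shiftDir, if_neg hleft, if_pos ⟨u, rfl, hu⟩]

noncomputable def shifted (α : ℝ) (z : V → ℝ) (a b : ν → ℝ) (η : ℝ) (u : V) : ℝ :=
  z u + η * shiftDir α z a b ((tightGraph α z).connectedComponentMk u)

lemma eventually_shifted_mem_Ioo [Fintype V]
    (hab : ∀ k k' (s : ℤ), s.natAbs < Fintype.card V → a k - b k' ≠ s * α)
    {u : V} {k : ν} (hu : z u ∈ Icc (a k) (b k)) :
    ∀ᶠ η in 𝓝[>] 0, shifted α z a b η u ∈ Ioo (a k) (b k) := by
  refine (eventually_lt_add_mul ?_).and (eventually_add_mul_lt ?_)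
  · rcases hu.1.lt_or_eq with h | h
    · exact .inl h
    · exact .inr ⟨h, by rw [shiftDir_eq_one ⟨k, h⟩]; exact one_pos⟩
  · rcases hu.2.lt_or_eq with h | h
    · exact .inl h
    · exact .inr ⟨h, by rw [shiftDir_eq_neg_one hab ⟨k, h.symm⟩]; exact neg_one_lt_zero⟩

lemma eventually_le_abs_shifted_sub {u v : V} (huv : α ≤ |z u - z v|) :
    ∀ᶠ η in 𝓝[>] 0, α ≤ |shifted α z a b η u - shifted α z a b η v| := by
  by_cases hr : (tightGraph α z).Reachable u v
  · refine Eventually.of_forall fun η => ?_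
    rw [shifted, shifted, SimpleGraph.ConnectedComponent.eq.mpr hr]
    simpa using huv
  · have hlt : α < |z u - z v| :=
      huv.lt_of_ne fun h => hr (SimpleGraph.Adj.reachable ⟨fun h' => hr (h' ▸ .rfl), h.symm⟩)
    refine eventually_nhdsWithin_of_eventually_nhds ?_
    refine (Continuous.tendsto' ?_ 0 _ (by simp [shifted])).eventually_const_lt hlt |>.mono
      fun _ => le_of_lt
    unfold shifted
    fun_prop

theorem exists_shift_mem_Ioo [Fintype V] [Finite ν]
    (hab : ∀ k k' (s : ℤ), s.natAbs < Fintype.card V → a k - b k' ≠ s * α) :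
    ∃ z' : V → ℝ, (∀ u k, z u ∈ Icc (a k) (b k) → z' u ∈ Ioo (a k) (b k)) ∧
      ∀ u v, α ≤ |z u - z v| → α ≤ |z' u - z' v| := by
  have h : ∀ᶠ η in 𝓝[>] 0, (∀ u k, z u ∈ Icc (a k) (b k) →
      shifted α z a b η u ∈ Ioo (a k) (b k)) ∧ ∀ u v, α ≤ |z u - z v| →
      α ≤ |shifted α z a b η u - shifted α z a b η v| := by
    simp only [eventually_and, eventually_all]
    exact ⟨fun u k => eventually_shifted_mem_Ioo hab, fun u v => eventually_le_abs_shifted_sub⟩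
  obtain ⟨η, hη⟩ := h.exists
  exact ⟨_, hη⟩

end TightGraph

lemma exists_lt_constrainedFeasible {d n : ℕ} {pts : Fin n → EuclideanSpace ℝ (Fin d)}
    {α : ℝ} {p q : ℕ} {r : ℝ} {c : Fin p → EuclideanSpace ℝ (Fin d)}
    {e : Fin q → EuclideanSpace ℝ (Fin d)} (hc : ∀ i, OnAxis (c i)) (he : ∀ j, OnAxis (e j))
    (hcovc : ∀ k, ∃ i, dist (pts k) (c i) < r) (hcove : ∀ k, ∃ j, dist (pts k) (e j) < r)
    (hsep : ∀ i j, α ≤ dist (c i) (e j)) :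
    ∃ r' < r, ConstrainedFeasible pts α p q r' := by
  have hcov : ∀ᶠ r' in 𝓝[<] r,
      (∀ k, ∃ i, dist (pts k) (c i) ≤ r') ∧ ∀ k, ∃ j, dist (pts k) (e j) ≤ r' := by
    simp only [eventually_and, eventually_all]
    refine ⟨fun k => ?_, fun k => ?_⟩
    · obtain ⟨i, hi⟩ := hcovc k
      exact eventually_nhdsWithin_of_eventually_nhds
        ((eventually_gt_nhds hi).mono fun _ h => ⟨i, h.le⟩)
    · obtain ⟨j, hj⟩ := hcove k
      exact eventually_nhdsWithin_of_eventually_nhds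
        ((eventually_gt_nhds hj).mono fun _ h => ⟨j, h.le⟩)
  obtain ⟨r', ⟨hcovc', hcove'⟩, hr'⟩ := (hcov.and self_mem_nhdsWithin).exists
  exact ⟨r', hr', c, e, hc, he, hcovc', hcove', hsep⟩

theorem stmt10_general (d n : ℕ) (hd : 0 < d)
    (pts : Fin n → EuclideanSpace ℝ (Fin d))
    (α : ℝ) (hα : 0 < α) (p q : ℕ)
    (r : ℝ) (hfeas : ConstrainedFeasible pts α p q r)
    (hAB : ∀ i i' : Fin n, distToAxis (pts i) ≤ r → distToAxis (pts i') ≤ r →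
      ∀ t : ℕ, t ≤ p + q - 1 → |aEnd hd (pts i) r - bEnd hd (pts i') r| ≠ t * α) :
    ∃ r' < r, ConstrainedFeasible pts α p q r' := by
  obtain ⟨c, e, hc, he, hcovc, hcove, hsep⟩ := hfeas
  have hD : ∀ k, distToAxis (pts k) ≤ r := fun k =>
    let ⟨i, hi⟩ := hcovc k; (distToAxis_le_dist hd (hc i) _).trans hi
  let z : Fin p ⊕ Fin q → ℝ := Sum.elim (fun i => c i ⟨0, hd⟩) (fun j => e j ⟨0, hd⟩)
  obtain ⟨z', hz'cov, hz'sep⟩ := exists_shift_mem_Ioo (α := α) (z := z)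
    (a := fun k => aEnd hd (pts k) r) (b := fun k => bEnd hd (pts k) r) fun k k' s hs heq =>
      hAB k k' (hD k) (hD k') s.natAbs
        (by simp only [Fintype.card_sum, Fintype.card_fin] at hs; omega)
        (by rw [heq, abs_mul, abs_of_pos hα, Nat.cast_natAbs, Int.cast_abs])
  refine exists_lt_constrainedFeasible (c := fun i => EuclideanSpace.single _ (z' (.inl i)))
    (e := fun j => EuclideanSpace.single _ (z' (.inr j))) (fun _ => onAxis_single hd _)
    (fun _ => onAxis_single hd _) (fun k => ?_) (fun k => ?_) fun i j => ?_
  · obtain ⟨i, hi⟩ := hcovc k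
    exact ⟨i, dist_lt_of_mem_Ioo hd (onAxis_single hd _) (hD k) (by
      simpa using hz'cov (.inl i) k (mem_Icc_of_dist_le hd (hc i) hi))⟩
  · obtain ⟨j, hj⟩ := hcove k
    exact ⟨j, dist_lt_of_mem_Ioo hd (onAxis_single hd _) (hD k) (by
      simpa using hz'cov (.inr j) k (mem_Icc_of_dist_le hd (he j) hj))⟩
  · rw [dist_eq_abs_of_onAxis hd (onAxis_single hd _) (onAxis_single hd _)]
    simpa using hz'sep (.inl i) (.inr j) (by
      simpa [z, dist_eq_abs_of_onAxis hd (hc i) (he j)] using hsep i j)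

/-- (No general position assumption.) Suppose `r` is a
constrained-feasible radius and every non-exceptional distance between endpoints of `E(r)`
differs from `t·α` for every integer `0 ≤ t ≤ p + q − 1`.  The non-exceptional distances
are: the distances `|aᵢ(r) − a_{i'}(r)|` and `|bᵢ(r) − b_{i'}(r)|` for pairs `(i, i')`
with neither `(i, i')` nor `(i', i)` exceptional, and all mixed distances
`|aᵢ(r) − b_{i'}(r)|`.  Then some `r' < r` is constrained-feasible. -/
theorem stmt10 (d n : ℕ) (hd : 0 < d) (hn : 0 < n)
    (pts : Fin n → EuclideanSpace ℝ (Fin d))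
    (α : ℝ) (hα : 0 < α) (p q : ℕ) (hp : 1 ≤ p) (hq : 1 ≤ q)
    (r : ℝ) (hfeas : ConstrainedFeasible pts α p q r)
    (hAA : ∀ i i' : Fin n, distToAxis (pts i) ≤ r → distToAxis (pts i') ≤ r →
      ¬ ExcPair hd pts α p q i i' → ¬ ExcPair hd pts α p q i' i →
      ∀ t : ℕ, t ≤ p + q - 1 →
        |aEnd hd (pts i) r - aEnd hd (pts i') r| ≠ t * α ∧
        |bEnd hd (pts i) r - bEnd hd (pts i') r| ≠ t * α)
    (hAB : ∀ i i' : Fin n, distToAxis (pts i) ≤ r → distToAxis (pts i') ≤ r →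
      ∀ t : ℕ, t ≤ p + q - 1 → |aEnd hd (pts i) r - bEnd hd (pts i') r| ≠ t * α) :
    ∃ r' < r, ConstrainedFeasible pts α p q r' :=
  stmt10_general d n hd pts α hα p q r hfeas hAB
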